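/- arXiv:hep-th/0305189 — 2 statements merged into one kernel-verified Lean document; each statement's English description precedes it below -/
import Mathlib

section
/- Let M be an N-periodic infinite symmetric tridiagonal matrix with nonzero off-diagonal entries. If X is an N-periodic infinite antisymmetric matrix of maximal degree k commuting with M, then X = A(M)_+ − A(M)_− for some polynomial A of degree at most k, where A(M)_± denote the strictly upper and strictly lower triangular parts of A(M). -/
/-! By induction on `k`. For `i + 2 ≤ j` the entry `[X, M] i j` involves only strictly upper
entries of `X`, where `Y₊ − Y₋` agrees with `Y`. Hence the weaker hypothesis "`[X, M] i j = 0`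
for `i + 2 ≤ j`" passes from `X` to `X − c (Mᵐ₊ − Mᵐ₋)`, as `Mᵐ` commutes with `M`. At
`(i, i + k + 1)` it gives the recurrence `dᵢ yᵢ₊ₖ = yᵢ dᵢ₊₁` for the top diagonal
`dᵢ = X i (i + k)`. The top diagonal `∏_{s<k} yᵢ₊ₛ` of `Mᵏ` satisfies the same recurrence and
never vanishes, so `d` is `c` times it, and `X − c (Mᵏ₊ − Mᵏ₋)` is antisymmetric of maximal
degree `k − 1`. -/

namespace Toda

/-- Infinite ℤ×ℤ matrices over ℂ. -/
abbrev Mat : Type := ℤ → ℤ → ℂ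

/-- Matrix multiplication (entrywise `tsum`; for band-type matrices these sums
are finitely supported). -/
noncomputable def mul (X Y : Mat) : Mat := fun i j => ∑' k : ℤ, X i k * Y k j

/-- Commutator. -/
noncomputable def comm (X Y : Mat) : Mat := mul X Y - mul Y X

/-- Strictly upper triangular part. -/
def upper (X : Mat) : Mat := fun i j => if i < j then X i j else 0

/-- Strictly lower triangular part. -/
def lower (X : Mat) : Mat := fun i j => if j < i then X i j else 0

/-- Diagonal part. -/
def diagPart (X : Mat) : Mat := fun i j => if i = j then X i j else 0

/-- Identity matrix. -/
def one : Mat := fun i j => if i = j then 1 else 0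

/-- Matrix powers. -/
noncomputable def pow (X : Mat) : ℕ → Mat
  | 0 => one
  | m + 1 => mul X (pow X m)

/-- Evaluate a polynomial on a matrix. -/
noncomputable def evalPoly (A : Polynomial ℂ) (X : Mat) : Mat :=
  ∑ m ∈ Finset.range (A.natDegree + 1), A.coeff m • pow X m

/-- `N`-periodicity of entries. -/
def Periodic (N : ℕ) (X : Mat) : Prop := ∀ i j, X (i + N) (j + N) = X i j

/-- `X` has (pure) degree `k`: nonzero entries only on diagonal `j = i + k`. -/
def HasDegree (k : ℤ) (X : Mat) : Prop := ∀ i j, X i j ≠ 0 → j = i + k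

/-- `X` has maximal degree `k`: entries vanish above diagonal `k`. -/
def MaxDeg (k : ℤ) (X : Mat) : Prop := ∀ i j, X i j ≠ 0 → j - i ≤ k

/-- The infinite symmetric tridiagonal Toda Lax matrix with diagonal `φ` and
off-diagonal entries `y`. -/
def todaM (φ y : ℤ → ℂ) : Mat := fun i j =>
  if j = i then φ i
  else if j = i + 1 then y i
  else if i = j + 1 then y j
  else 0

/-- Degree-`r` component of a matrix. -/
def topPart (r : ℤ) (X : Mat) : Mat := fun i j => if j = i + r then X i j else 0

/-- Inverse of the degree-`r` component (a matrix of degree `-r`). -/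
noncomputable def topInv (r : ℤ) (X : Mat) : Mat :=
  fun i j => if j = i - r then (X j (j + r))⁻¹ else 0

/-- Entrywise geometric series `Σ_{k≥0} (-1)^k Q^k`, which is a finite sum in
each entry when `Q` has maximal degree `≤ -1`. -/
noncomputable def geomSeries (Q : Mat) : Mat :=
  fun i j => ∑ m ∈ Finset.range ((i - j).toNat + 1), (-1 : ℂ) ^ m * pow Q m i j

/-- The inverse `R⁻¹ = (R^{(r)})⁻¹ Σ_{k≥0} (-1)^k (R̃ (R^{(r)})⁻¹)^k` of a matrix
of maximal degree `r` with invertible top component. -/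
noncomputable def geomInv (r : ℤ) (R : Mat) : Mat :=
  mul (topInv r R) (geomSeries (mul (R - topPart r R) (topInv r R)))

/-- Integer powers of a matrix, negative powers via the geometric-series inverse. -/
noncomputable def intPow (X : Mat) (m : ℤ) : Mat :=
  if 0 ≤ m then pow X m.toNat else pow (geomInv 1 X) (-m).toNat

/-- Shift operator `Z = D^N`. -/
def shiftZ (N : ℕ) : Mat := fun i j => if j = i + N then 1 else 0

/-- Inverse shift `Z⁻¹`. -/
def shiftZinv (N : ℕ) : Mat := fun i j => if j = i - N then 1 else 0

/-- The finite `N×N` periodic Toda Lax matrix with spectral parameter `z`,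
diagonal `p`, off-diagonal entries `y 1, …, y (N-1)` and corner entries
`y 0 * z`, `y 0 * z⁻¹`. -/
noncomputable def laxFin (N : ℕ) (p y : ℕ → ℂ) (z : ℂ) :
    Matrix (Fin N) (Fin N) ℂ := fun i j =>
  if (i : ℕ) = j then p i
  else if (j : ℕ) = i + 1 then y (i + 1)
  else if (i : ℕ) = j + 1 then y (j + 1)
  else if (i : ℕ) = 0 ∧ (j : ℕ) = N - 1 then y 0 * z
  else if (i : ℕ) = N - 1 ∧ (j : ℕ) = 0 then y 0 * z⁻¹
  else 0

/-- Embedding of polynomials in `x` into the field `ℂ((x⁻¹))` of Laurent series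
at infinity, sending `x` to the inverse of the local parameter. -/
noncomputable def atInf (p : Polynomial ℂ) : LaurentSeries ℂ :=
  Polynomial.eval₂ HahnSeries.C (HahnSeries.single (-1 : ℤ) 1) p

lemma tsum_eq_add_add {α : Type*} [AddCommMonoid α] [TopologicalSpace α] {f : ℤ → α}
    (a : ℤ) (hf : ∀ l ∉ ({a - 1, a, a + 1} : Finset ℤ), f l = 0) :
    ∑' l, f l = f (a - 1) + f a + f (a + 1) := by
  rw [tsum_eq_sum hf, Finset.sum_insert (by simp; omega), Finset.sum_insert (by simp),
    Finset.sum_singleton, add_assoc]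

lemma exists_eq_const_mul_of_mul_succ_eq {K : Type*} [Field K] {d e : ℤ → K}
    (he : ∀ i, e i ≠ 0) (h : ∀ i, d i * e (i + 1) = d (i + 1) * e i) :
    ∃ c, ∀ i, d i = c * e i := by
  have hstep : ∀ i, d (i + 1) / e (i + 1) = d i / e i := fun i => by
    rw [div_eq_div_iff (he _) (he _), h i]
  refine ⟨d 0 / e 0, fun i => ?_⟩
  rw [← div_eq_iff (he i)]
  induction i using Int.induction_on with
  | zero => rfl
  | succ n ih => rw [hstep, ih]
  | pred n ih => rw [← ih, ← hstep, sub_add_cancel]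

lemma prod_range_mul_eq_mul_prod_range (y : ℤ → ℂ) (n : ℕ) (i : ℤ) :
    (∏ s ∈ Finset.range n, y (i + s)) * y (i + n)
      = y i * ∏ s ∈ Finset.range n, y (i + 1 + s) := by
  rw [← Finset.prod_range_succ (fun s : ℕ => y (i + s)), Finset.prod_range_succ', mul_comm]
  push_cast
  rw [add_zero]
  congr 1
  exact Finset.prod_congr rfl fun s _ => by ring_nf

protected lemma mul_one (X : Mat) : mul X one = X := by
  funext i j
  rw [mul, tsum_eq_single j (fun l hl => by simp [one, hl])]
  simp [one]

protected lemma one_mul (X : Mat) : mul one X = X := by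
  funext i j
  rw [mul, tsum_eq_single i (fun l hl => by simp [one, Ne.symm hl])]
  simp [one]

lemma evalPoly_eq_sum (A : Polynomial ℂ) (X : Mat) :
    evalPoly A X = A.sum fun m a => a • pow X m :=
  (A.sum_over_range (f := fun m a => a • pow X m) fun _ => zero_smul ℂ _).symm

lemma evalPoly_add (A B : Polynomial ℂ) (X : Mat) :
    evalPoly (A + B) X = evalPoly A X + evalPoly B X := by
  simp only [evalPoly_eq_sum]
  exact Polynomial.sum_add_index _ _ _ (fun _ => zero_smul ℂ _) fun _ _ _ => add_smul _ _ _

lemma evalPoly_monomial (m : ℕ) (c : ℂ) (X : Mat) :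
    evalPoly (Polynomial.monomial m c) X = c • pow X m := by
  rw [evalPoly_eq_sum, Polynomial.sum_monomial_index _ _ (zero_smul ℂ _)]

lemma eq_zero_of_maxDeg_zero {X : Mat} (hasymm : ∀ i j, X i j = -X j i) (hdeg : MaxDeg 0 X) :
    X = 0 := by
  funext i j
  by_contra hij
  change X i j ≠ 0 at hij
  have hji : X j i ≠ 0 := by rwa [hasymm, neg_ne_zero] at hij
  obtain rfl : i = j := by have := hdeg i j hij; have := hdeg j i hji; omega
  exact hij (CharZero.eq_neg_self_iff.mp (hasymm i i))

def upperSubLower (Y : Mat) : Mat := upper Y - lower Y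

lemma upperSubLower_apply_of_lt (Y : Mat) {i j : ℤ} (hij : i < j) :
    upperSubLower Y i j = Y i j := by
  simp [upperSubLower, upper, lower, hij, hij.not_gt]

lemma upperSubLower_apply_of_gt (Y : Mat) {i j : ℤ} (hij : j < i) :
    upperSubLower Y i j = -Y i j := by
  simp [upperSubLower, upper, lower, hij, hij.not_gt]

lemma upperSubLower_apply_self (Y : Mat) (i : ℤ) : upperSubLower Y i i = 0 := by
  simp [upperSubLower, upper, lower]

lemma upperSubLower_add (Y Z : Mat) :
    upperSubLower (Y + Z) = upperSubLower Y + upperSubLower Z := by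
  funext i j
  simp only [upperSubLower, upper, lower, Pi.add_apply, Pi.sub_apply]
  split_ifs <;> ring

lemma upperSubLower_smul (c : ℂ) (Y : Mat) : upperSubLower (c • Y) = c • upperSubLower Y := by
  funext i j
  simp only [upperSubLower, upper, lower, Pi.smul_apply, Pi.sub_apply, smul_eq_mul]
  split_ifs <;> ring

lemma upperSubLower_antisymm {Y : Mat} (hY : ∀ i j, Y i j = Y j i) (i j : ℤ) :
    upperSubLower Y i j = -upperSubLower Y j i := by
  rcases lt_trichotomy i j with hij | rfl | hij
  · rw [upperSubLower_apply_of_lt Y hij, upperSubLower_apply_of_gt Y hij, hY, neg_neg]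
  · rw [upperSubLower_apply_self, neg_zero]
  · rw [upperSubLower_apply_of_gt Y hij, upperSubLower_apply_of_lt Y hij, hY]

section TodaLax

variable (φ y : ℤ → ℂ)

lemma todaM_symm (i j : ℤ) : todaM φ y i j = todaM φ y j i := by
  unfold todaM
  split_ifs <;> first | rfl | omega | congr 1

lemma todaM_eq_zero {i j : ℤ} (h : j ∉ ({i - 1, i, i + 1} : Finset ℤ)) :
    todaM φ y i j = 0 := by
  simp only [Finset.mem_insert, Finset.mem_singleton, not_or] at h
  unfold todaM
  rw [if_neg h.2.1, if_neg h.2.2, if_neg (by omega)]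

lemma todaM_mul_apply (X : Mat) (i j : ℤ) :
    mul (todaM φ y) X i j = y (i - 1) * X (i - 1) j + φ i * X i j + y i * X (i + 1) j := by
  rw [mul, tsum_eq_add_add i fun l hl => by rw [todaM_eq_zero φ y hl, zero_mul]]
  unfold todaM
  split_ifs <;> first | omega | ring

lemma mul_todaM_apply (X : Mat) (i j : ℤ) :
    mul X (todaM φ y) i j = X i (j - 1) * y (j - 1) + X i j * φ j + X i (j + 1) * y j := by
  rw [mul, tsum_eq_add_add j fun l hl => by rw [todaM_symm, todaM_eq_zero φ y hl, mul_zero]]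
  unfold todaM
  split_ifs <;> first | omega | ring

lemma comm_todaM_apply (X : Mat) (i j : ℤ) :
    comm X (todaM φ y) i j
      = X i (j - 1) * y (j - 1) + X i j * φ j + X i (j + 1) * y j
        - (y (i - 1) * X (i - 1) j + φ i * X i j + y i * X (i + 1) j) := by
  rw [comm, Pi.sub_apply, Pi.sub_apply, mul_todaM_apply, todaM_mul_apply]

lemma comm_todaM_congr_upper {X Y : Mat} (hXY : ∀ a b, a < b → X a b = Y a b) {i j : ℤ}
    (hij : i + 2 ≤ j) : comm X (todaM φ y) i j = comm Y (todaM φ y) i j := by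
  simp only [comm_todaM_apply]
  rw [hXY i (j - 1) (by omega), hXY i j (by omega), hXY i (j + 1) (by omega),
    hXY (i - 1) j (by omega), hXY (i + 1) j (by omega)]

lemma pow_todaM_succ_apply (m : ℕ) (i j : ℤ) :
    pow (todaM φ y) (m + 1) i j
      = y (i - 1) * pow (todaM φ y) m (i - 1) j + φ i * pow (todaM φ y) m i j
        + y i * pow (todaM φ y) m (i + 1) j :=
  todaM_mul_apply φ y _ i j

lemma todaM_mul_pow (m : ℕ) :
    mul (todaM φ y) (pow (todaM φ y) m) = mul (pow (todaM φ y) m) (todaM φ y) := by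
  induction m with
  | zero => rw [pow, Toda.mul_one, Toda.one_mul]
  | succ m ih =>
    funext i j
    have hL (a b : ℤ) :
        pow (todaM φ y) (m + 1) a b = mul (pow (todaM φ y) m) (todaM φ y) a b := by
      rw [← ih]; rfl
    simp only [mul_todaM_apply] at hL
    have hR := pow_todaM_succ_apply φ y m
    rw [todaM_mul_apply, hL, hL, hL, mul_todaM_apply, hR, hR, hR]
    ring

lemma comm_pow_todaM (m : ℕ) : comm (pow (todaM φ y) m) (todaM φ y) = 0 := by
  rw [comm, todaM_mul_pow, sub_self]

lemma pow_todaM_symm (m : ℕ) (i j : ℤ) : pow (todaM φ y) m i j = pow (todaM φ y) m j i := by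
  induction m generalizing i j with
  | zero => simp only [pow, one, eq_comm]
  | succ m ih =>
    have hpow : pow (todaM φ y) (m + 1) j i = mul (pow (todaM φ y) m) (todaM φ y) j i := by
      rw [← todaM_mul_pow]; rfl
    rw [pow_todaM_succ_apply, hpow, mul_todaM_apply, ih j, ih i, ih (i + 1)]
    ring

lemma pow_todaM_eq_zero_of_lt (m : ℕ) {i j : ℤ} (hij : i + m < j) :
    pow (todaM φ y) m i j = 0 := by
  induction m generalizing i with
  | zero => simp only [pow, one]; rw [if_neg (by omega)]
  | succ m ih =>
    push_cast at hij
    rw [pow_todaM_succ_apply, ih (by omega), ih (by omega), ih (by omega)]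
    ring

lemma pow_todaM_apply_add_self (m : ℕ) (i : ℤ) :
    pow (todaM φ y) m i (i + m) = ∏ s ∈ Finset.range m, y (i + s) := by
  induction m generalizing i with
  | zero => simp [pow, one]
  | succ m ih =>
    rw [pow_todaM_succ_apply, pow_todaM_eq_zero_of_lt φ y m (by push_cast; omega),
      pow_todaM_eq_zero_of_lt φ y m (by push_cast; omega),
      show i + ((m + 1 : ℕ) : ℤ) = i + 1 + m by push_cast; ring, ih, Finset.prod_range_succ,
      prod_range_mul_eq_mul_prod_range]
    ring

end TodaLax

section Commutant

variable {φ y : ℤ → ℂ}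

lemma exists_apply_add_eq_const_mul_pow (hy0 : ∀ i, y i ≠ 0) {n : ℕ} (hn : 1 ≤ n) {X : Mat}
    (hdeg : MaxDeg n X) (hcomm : ∀ i j, i + 2 ≤ j → comm X (todaM φ y) i j = 0) :
    ∃ c, ∀ i, X i (i + n) = c * pow (todaM φ y) n i (i + n) := by
  have hzero : ∀ i j, (n : ℤ) < j - i → X i j = 0 := fun i j h => by
    by_contra hne; have := hdeg i j hne; omega
  have hX : ∀ i, X i (i + n) * y (i + n) = y i * X (i + 1) (i + 1 + n) := fun i => by
    have h := hcomm i (i + n + 1) (by omega)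
    rw [comm_todaM_apply, hzero i (i + n + 1) (by omega), hzero i (i + n + 1 + 1) (by omega),
      hzero (i - 1) (i + n + 1) (by omega), add_sub_cancel_right,
      show i + n + 1 = i + 1 + n by ring] at h
    linear_combination h
  have hP : ∀ i, pow (todaM φ y) n i (i + n) ≠ 0 := fun i => by
    rw [pow_todaM_apply_add_self]
    exact Finset.prod_ne_zero_iff.mpr fun s _ => hy0 _
  refine exists_eq_const_mul_of_mul_succ_eq hP fun i => mul_left_cancel₀ (hy0 i) ?_
  have hPrec := prod_range_mul_eq_mul_prod_range y n i
  simp only [pow_todaM_apply_add_self]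
  linear_combination (∏ s ∈ Finset.range n, y (i + s)) * hX i - X i (i + n) * hPrec

lemma maxDeg_sub_smul_upperSubLower_pow {k : ℕ} {X : Mat} {c : ℂ}
    (hdeg : MaxDeg (k + 1 : ℕ) X)
    (htop : ∀ i, X i (i + (k + 1 : ℕ)) = c * pow (todaM φ y) (k + 1) i (i + (k + 1 : ℕ))) :
    MaxDeg k (X - c • upperSubLower (pow (todaM φ y) (k + 1))) := by
  intro i j hij
  by_contra hlt
  refine hij ?_
  rw [Pi.sub_apply, Pi.sub_apply, Pi.smul_apply, Pi.smul_apply,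
    upperSubLower_apply_of_lt _ (by omega), smul_eq_mul, sub_eq_zero]
  rcases (show j = i + (k + 1 : ℕ) ∨ i + (k + 1 : ℕ) < j by push_cast; omega) with rfl | hgt
  · exact htop i
  · rw [pow_todaM_eq_zero_of_lt φ y _ hgt, mul_zero]
    by_contra hne
    have := hdeg i j hne
    omega

lemma comm_todaM_sub_smul_upperSubLower_pow {X : Mat} (c : ℂ) (m : ℕ)
    (hcomm : ∀ i j, i + 2 ≤ j → comm X (todaM φ y) i j = 0) {i j : ℤ} (hij : i + 2 ≤ j) :
    comm (X - c • upperSubLower (pow (todaM φ y) m)) (todaM φ y) i j = 0 := by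
  have hupper : ∀ a b, a < b → (X - c • upperSubLower (pow (todaM φ y) m)) a b
      = (X - c • pow (todaM φ y) m) a b := fun a b hab => by
    simp only [Pi.sub_apply, Pi.smul_apply, upperSubLower_apply_of_lt _ hab]
  have hX := hcomm i j hij
  have hP := congrFun (congrFun (comm_pow_todaM φ y m) i) j
  rw [comm_todaM_congr_upper φ y hupper hij]
  rw [comm_todaM_apply] at hX hP ⊢
  simp only [Pi.sub_apply, Pi.smul_apply, smul_eq_mul, Pi.zero_apply] at hP ⊢
  linear_combination hX - c * hP

theorem exists_polynomial_of_comm_todaM_eq_zero_above (hy0 : ∀ i, y i ≠ 0) (k : ℕ) {X : Mat}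
    (hasymm : ∀ i j, X i j = -X j i) (hdeg : MaxDeg k X)
    (hcomm : ∀ i j, i + 2 ≤ j → comm X (todaM φ y) i j = 0) :
    ∃ A : Polynomial ℂ, A.natDegree ≤ k ∧ X = upperSubLower (evalPoly A (todaM φ y)) := by
  induction k generalizing X with
  | zero =>
    refine ⟨0, le_rfl, ?_⟩
    rw [eq_zero_of_maxDeg_zero hasymm hdeg]
    funext i j
    simp [upperSubLower, upper, lower, evalPoly]
  | succ k ih =>
    obtain ⟨c, hc⟩ := exists_apply_add_eq_const_mul_pow hy0 (by omega) hdeg hcomm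
    have hUasymm := upperSubLower_antisymm (pow_todaM_symm φ y (k + 1))
    obtain ⟨A, hA, hXA⟩ := ih (X := X - c • upperSubLower (pow (todaM φ y) (k + 1)))
      (fun i j => by
        simp only [Pi.sub_apply, Pi.smul_apply, smul_eq_mul]
        rw [hasymm i j, hUasymm i j]
        ring)
      (maxDeg_sub_smul_upperSubLower_pow hdeg hc)
      (fun i j => comm_todaM_sub_smul_upperSubLower_pow c (k + 1) hcomm)
    refine ⟨A + Polynomial.monomial (k + 1) c, (Polynomial.natDegree_add_le _ _).trans
      (max_le (by omega) (Polynomial.natDegree_monomial_le c)), ?_⟩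
    rw [evalPoly_add, evalPoly_monomial, upperSubLower_add, upperSubLower_smul, ← hXA,
      sub_add_cancel]

end Commutant

theorem antisymmetric_commutant_is_pm_polynomial_general
    (φ y : ℤ → ℂ)
    (hy0 : ∀ i, y i ≠ 0)
    (k : ℕ) (X : Mat) (hXdeg : MaxDeg k X)
    (hXasym : ∀ i j, X i j = -X j i)
    (hcomm : comm X (todaM φ y) = 0) :
    ∃ A : Polynomial ℂ, A.natDegree ≤ k ∧
      X = upper (evalPoly A (todaM φ y)) - lower (evalPoly A (todaM φ y)) :=
  exists_polynomial_of_comm_todaM_eq_zero_above hy0 k hXasym hXdeg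
    fun i j _ => congrFun (congrFun hcomm i) j

/-- a periodic antisymmetric matrix of maximal degree `k` commuting
with the Toda Lax matrix `M` equals `A(M)₊ − A(M)₋` for a polynomial `A` of
degree at most `k`. -/
theorem antisymmetric_commutant_is_pm_polynomial
    (N : ℕ) (hN : 0 < N) (φ y : ℤ → ℂ)
    (hφ : ∀ i, φ (i + N) = φ i) (hy : ∀ i, y (i + N) = y i)
    (hy0 : ∀ i, y i ≠ 0)
    (k : ℕ) (X : Mat) (hXper : Periodic N X) (hXdeg : MaxDeg k X)
    (hXasym : ∀ i j, X i j = -X j i)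
    (hcomm : comm X (todaM φ y) = 0) :
    ∃ A : Polynomial ℂ, A.natDegree ≤ k ∧
      X = upper (evalPoly A (todaM φ y)) - lower (evalPoly A (todaM φ y)) :=
  antisymmetric_commutant_is_pm_polynomial_general φ y hy0 k X hXdeg hXasym hcomm

end Toda
end

section
/- Let M be an N-periodic infinite symmetric tridiagonal matrix with nonzero off-diagonals. If X is an N-periodic matrix of degree exactly 0 (diagonal) that commutes with M, then X = λ·I for some λ ∈ ℂ. Consequently, the Euclid-type algorithm on operators P_N(M)_+ − P_N(M)_− and W'(M)_+ − W'(M)_− terminates: after finitely many subtraction steps one obtains either zero or a scalar multiple of the identity. -/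
namespace Toda

theorem HasDegree.apply_eq_zero {k : ℤ} {X : Mat} (hX : HasDegree k X) {i j : ℤ}
    (hij : j ≠ i + k) : X i j = 0 :=
  not_not.mp fun h => hij (hX i j h)

theorem HasDegree.mul_apply_left {X : Mat} (hX : HasDegree 0 X) (Y : Mat) (i j : ℤ) :
    mul X Y i j = X i i * Y i j :=
  tsum_eq_single i fun k hk => by
    rw [hX.apply_eq_zero (by simpa using hk), zero_mul]

theorem HasDegree.mul_apply_right {X : Mat} (hX : HasDegree 0 X) (Y : Mat) (i j : ℤ) :
    mul Y X i j = Y i j * X j j :=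
  tsum_eq_single j fun k hk => by
    rw [hX.apply_eq_zero (by simpa using hk.symm), mul_zero]

theorem HasDegree.comm_apply {X : Mat} (hX : HasDegree 0 X) (Y : Mat) (i j : ℤ) :
    comm X Y i j = (X i i - X j j) * Y i j := by
  rw [comm, Pi.sub_apply, Pi.sub_apply, hX.mul_apply_left, hX.mul_apply_right]
  ring

theorem HasDegree.eq_smul_one {X : Mat} (hX : HasDegree 0 X) {c : ℂ}
    (hc : ∀ i, X i i = c) : X = c • one := by
  funext i j
  by_cases hij : i = j
  · subst hij
    simp [one, hc]
  · simp [one, hij, hX.apply_eq_zero (k := 0) (by simpa using Ne.symm hij)]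

theorem HasDegree.eq_smul_one_of_comm_eq_zero {X Y : Mat} (hX : HasDegree 0 X)
    (hY : ∀ i, Y i (i + 1) ≠ 0) (hcomm : comm X Y = 0) : ∃ c : ℂ, X = c • one := by
  have hdiag_periodic : Function.Periodic (fun i => X i i) 1 := fun i => by
    have h := congrFun (congrFun hcomm i) (i + 1)
    rw [hX.comm_apply, Pi.zero_apply] at h
    exact (sub_eq_zero.mp ((mul_eq_zero.mp h).resolve_right (hY i))).symm
  exact ⟨X 0 0, hX.eq_smul_one fun i => by simpa using hdiag_periodic.int_mul i 0⟩

theorem todaM_apply_succ (φ y : ℤ → ℂ) (i : ℤ) : todaM φ y i (i + 1) = y i := by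
  simp [todaM]

theorem diagonal_commutant_is_scalar_general
    (φ y : ℤ → ℂ)
    (hy0 : ∀ i, y i ≠ 0)
    (X : Mat) (hXdiag : HasDegree 0 X)
    (hcomm : comm X (todaM φ y) = 0) :
    ∃ lam : ℂ, X = lam • one :=
  hXdiag.eq_smul_one_of_comm_eq_zero (fun i => todaM_apply_succ φ y i ▸ hy0 i) hcomm

/-- a periodic diagonal matrix commuting with the Toda Lax matrix
is a scalar multiple of the identity (whence the Euclid-type algorithm
terminates in a scalar). -/
theorem diagonal_commutant_is_scalar
    (N : ℕ) (hN : 0 < N) (φ y : ℤ → ℂ)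
    (hφ : ∀ i, φ (i + N) = φ i) (hy : ∀ i, y (i + N) = y i)
    (hy0 : ∀ i, y i ≠ 0)
    (X : Mat) (hXper : Periodic N X) (hXdiag : HasDegree 0 X)
    (hcomm : comm X (todaM φ y) = 0) :
    ∃ lam : ℂ, X = lam • one :=
  diagonal_commutant_is_scalar_general φ y hy0 X hXdiag hcomm

end Toda
end
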